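/- arXiv:1601.06102 — 3 statements merged into one kernel-verified Lean document; each statement's English description precedes it below -/
import Mathlib

section
/- (Theorem 3) Consider an interference network with K transmitters and G receivers in which every demand set satisfies 1 ≤ |S_j| ≤ K−2 and every message is requested by at least one receiver (for every k ∈ [K] there exists j ∈ [G] with k ∈ S_j). If d* maximizes ∑_{k=1}^K d_k over the degrees-of-freedom region, then the largest coordinate of d* is attained by at least two distinct indices, and max_k d*_k ≤ 1/2. -/
/-- (Theorem 3) In an interference network in which every demand set satisfies
`1 ≤ |S_j| ≤ K - 2` and every message is requested by at least one receiver,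
any maximizer `d⋆` of `∑ k, d k` over the degrees-of-freedom region has its largest
coordinate attained by at least two distinct indices, and this largest coordinate
is at most `1/2`. -/
theorem dof_max_two_largest {K G : ℕ} (hK : 0 < K)
    (S : Fin G → Finset (Fin K))
    (hcard : ∀ j, 1 ≤ (S j).card ∧ (S j).card + 2 ≤ K)
    (hreq : ∀ k : Fin K, ∃ j, k ∈ S j)
    (hne : ∀ j, ((S j)ᶜ : Finset (Fin K)).Nonempty)
    (dstar : Fin K → ℝ)
    (hd0 : ∀ k, 0 ≤ dstar k)
    (hdof : ∀ j, (∑ k ∈ S j, dstar k) + ((S j)ᶜ).sup' (hne j) dstar ≤ 1)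
    (hmax : ∀ d : Fin K → ℝ, (∀ k, 0 ≤ d k) →
      (∀ j, (∑ k ∈ S j, d k) + ((S j)ᶜ).sup' (hne j) d ≤ 1) →
      ∑ k, d k ≤ ∑ k, dstar k) :
    ∃ k₁ k₂ : Fin K, k₁ ≠ k₂ ∧ (∀ k, dstar k ≤ dstar k₁) ∧
      dstar k₂ = dstar k₁ ∧ dstar k₁ ≤ 1 / 2 := by
  classical
  -- K ≥ 3
  obtain ⟨j₀, -⟩ := hreq ⟨0, hK⟩
  have hK3 : 3 ≤ K := by
    have h1 := (hcard j₀).1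
    have h2 := (hcard j₀).2
    omega
  -- the argmax
  obtain ⟨k₁, -, hk₁'⟩ := Finset.exists_max_image (Finset.univ : Finset (Fin K)) dstar
    ⟨⟨0, hK⟩, Finset.mem_univ _⟩
  have hk₁max : ∀ k, dstar k ≤ dstar k₁ := fun k => hk₁' k (Finset.mem_univ k)
  -- if a second index attains the max, the max is ≤ 1/2
  have hhalf : ∀ k₂, k₂ ≠ k₁ → dstar k₂ = dstar k₁ → dstar k₁ ≤ 1 / 2 := by
    intro k₂ hne12 heq
    obtain ⟨j, hj⟩ := hreq k₁
    have hc := hdof j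
    by_cases hk2 : k₂ ∈ S j
    · have hsub : ({k₁, k₂} : Finset (Fin K)) ⊆ S j := by
        intro x hx
        simp only [Finset.mem_insert, Finset.mem_singleton] at hx
        rcases hx with rfl | rfl <;> assumption
      have hpair : ∑ k ∈ ({k₁, k₂} : Finset (Fin K)), dstar k = dstar k₁ + dstar k₂ :=
        Finset.sum_pair (Ne.symm hne12)
      have hle : dstar k₁ + dstar k₂ ≤ ∑ k ∈ S j, dstar k := by
        rw [← hpair]
        exact Finset.sum_le_sum_of_subset_of_nonneg hsub (fun i _ _ => hd0 i)
      obtain ⟨m, hm⟩ := hne j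
      have hsup : (0:ℝ) ≤ ((S j)ᶜ).sup' (hne j) dstar :=
        le_trans (hd0 m) (Finset.le_sup' dstar hm)
      linarith [heq]
    · have hk2' : k₂ ∈ (S j)ᶜ := Finset.mem_compl.mpr hk2
      have hsup : dstar k₂ ≤ ((S j)ᶜ).sup' (hne j) dstar := Finset.le_sup' dstar hk2'
      have hle : dstar k₁ ≤ ∑ k ∈ S j, dstar k :=
        Finset.single_le_sum (fun i _ => hd0 i) hj
      linarith [heq]
  by_cases hex : ∃ k₂, k₂ ≠ k₁ ∧ dstar k₂ = dstar k₁
  · obtain ⟨k₂, hne12, heq⟩ := hex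
    exact ⟨k₁, k₂, Ne.symm hne12, hk₁max, heq, hhalf k₂ hne12 heq⟩
  · exfalso
    push_neg at hex
    have hstrict : ∀ k, k ≠ k₁ → dstar k < dstar k₁ :=
      fun k hk => lt_of_le_of_ne (hk₁max k) (hex k hk)
    -- the second maximum
    have hT : (Finset.univ.erase k₁ : Finset (Fin K)).Nonempty := by
      rw [← Finset.card_pos, Finset.card_erase_of_mem (Finset.mem_univ _), Finset.card_univ,
        Fintype.card_fin]
      omega
    set m₂ : ℝ := (Finset.univ.erase k₁).sup' hT dstar with hm₂def
    have hm₂lt : m₂ < dstar k₁ := by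
      rw [hm₂def, Finset.sup'_lt_iff]
      intro k hk
      exact hstrict k (Finset.ne_of_mem_erase hk)
    have hMpos : 0 < dstar k₁ := by
      obtain ⟨k, hk⟩ := hT
      have := hd0 k
      have := hstrict k (Finset.ne_of_mem_erase hk)
      linarith
    -- set up perturbation parameters
    have hK2R : (1:ℝ) ≤ (K:ℝ) - 2 := by
      have : (3:ℝ) ≤ (K:ℝ) := by exact_mod_cast hK3
      linarith
    set δ : ℝ := min (dstar k₁ / ((K:ℝ) - 2)) ((dstar k₁ - m₂) / ((K:ℝ) - 1)) with hδdef
    have hδpos : 0 < δ := by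
      apply lt_min
      · exact div_pos hMpos (by linarith)
      · exact div_pos (by linarith) (by linarith)
    set ε : ℝ := ((K:ℝ) - 2) * δ with hεdef
    have hεleM : ε ≤ dstar k₁ := by
      have h1 : δ ≤ dstar k₁ / ((K:ℝ) - 2) := min_le_left _ _
      have h2 : ((K:ℝ) - 2) * (dstar k₁ / ((K:ℝ) - 2)) = dstar k₁ := by
        field_simp
      calc ε ≤ ((K:ℝ) - 2) * (dstar k₁ / ((K:ℝ) - 2)) := by
              apply mul_le_mul_of_nonneg_left h1; linarith
        _ = dstar k₁ := h2
    have hδK1 : ((K:ℝ) - 1) * δ ≤ dstar k₁ - m₂ := by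
      have h1 : δ ≤ (dstar k₁ - m₂) / ((K:ℝ) - 1) := min_le_right _ _
      have hK1pos : (0:ℝ) < (K:ℝ) - 1 := by linarith
      calc ((K:ℝ) - 1) * δ ≤ ((K:ℝ) - 1) * ((dstar k₁ - m₂) / ((K:ℝ) - 1)) := by
            apply mul_le_mul_of_nonneg_left h1; linarith
        _ = dstar k₁ - m₂ := by field_simp
    -- the perturbed point
    set d' : Fin K → ℝ := fun k => dstar k + (if k = k₁ then -ε else δ) with hd'def
    have hd'0 : ∀ k, 0 ≤ d' k := by
      intro k
      by_cases h : k = k₁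
      · simp only [hd'def]
        rw [if_pos h, h]
        linarith
      · simp only [hd'def, if_neg h]; have := hd0 k; linarith
    -- sum formula
    have hsumA : ∀ A : Finset (Fin K), ∑ k ∈ A, d' k
        = (∑ k ∈ A, dstar k) + (A.card : ℝ) * δ + (if k₁ ∈ A then -ε - δ else 0) := by
      intro A
      have hrw : ∀ k, d' k = dstar k + δ + (if k = k₁ then -ε - δ else 0) := by
        intro k
        simp only [hd'def]
        by_cases h : k = k₁
        · rw [if_pos h, if_pos h]; ring
        · rw [if_neg h, if_neg h]; ring
      simp only [hrw, Finset.sum_add_distrib, Finset.sum_const, Finset.sum_ite_eq',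
        nsmul_eq_mul]
      try ring
    -- feasibility of d'
    have hfeas : ∀ j, (∑ k ∈ S j, d' k) + ((S j)ᶜ).sup' (hne j) d' ≤ 1 := by
      intro j
      have hc := hdof j
      have hcR : ((S j).card : ℝ) ≤ (K:ℝ) - 2 := by
        have h2 := (hcard j).2
        have : ((S j).card : ℝ) + 2 ≤ (K:ℝ) := by exact_mod_cast h2
        linarith
      by_cases hk1 : k₁ ∈ S j
      · -- k₁ demanded: sum decreases enough, sup increases by δ
        have hsum := hsumA (S j)
        rw [if_pos hk1] at hsum
        have hsup : ((S j)ᶜ).sup' (hne j) d' ≤ ((S j)ᶜ).sup' (hne j) dstar + δ := by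
          apply Finset.sup'_le
          intro k hk
          have hk' : k ≠ k₁ := by
            intro h; subst h; exact (Finset.mem_compl.mp hk) hk1
          simp only [hd'def, if_neg hk']
          have := Finset.le_sup' dstar hk
          linarith
        have hcδ : ((S j).card : ℝ) * δ ≤ ε := by
          rw [hεdef]; apply mul_le_mul_of_nonneg_right hcR (le_of_lt hδpos)
        linarith
      · -- k₁ interfering
        have hk1' : k₁ ∈ (S j)ᶜ := Finset.mem_compl.mpr hk1
        have hsum := hsumA (S j)
        rw [if_neg hk1] at hsum
        have hsup : ((S j)ᶜ).sup' (hne j) d' ≤ dstar k₁ - ((S j).card : ℝ) * δ := by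
          apply Finset.sup'_le
          intro k hk
          by_cases h : k = k₁
          · simp only [hd'def]
            rw [if_pos h, h]
            have hcδ : ((S j).card : ℝ) * δ ≤ ε := by
              rw [hεdef]; apply mul_le_mul_of_nonneg_right hcR (le_of_lt hδpos)
            linarith
          · simp only [hd'def, if_neg h]
            have hm : dstar k ≤ m₂ := by
              rw [hm₂def]
              exact Finset.le_sup' dstar (Finset.mem_erase.mpr ⟨h, Finset.mem_univ k⟩)
            have : (((S j).card : ℝ) + 1) * δ ≤ ((K:ℝ) - 1) * δ := by
              apply mul_le_mul_of_nonneg_right (by linarith) (le_of_lt hδpos)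
            nlinarith
        have hsupM : dstar k₁ ≤ ((S j)ᶜ).sup' (hne j) dstar := Finset.le_sup' dstar hk1'
        linarith
    -- the sum strictly increases: contradiction
    have hlt := hmax d' hd'0 hfeas
    have hsumU := hsumA Finset.univ
    rw [if_pos (Finset.mem_univ k₁)] at hsumU
    rw [Finset.card_univ, Fintype.card_fin] at hsumU
    have hKδ : (K:ℝ) * δ - ε - δ = δ := by rw [hεdef]; ring
    rw [hsumU] at hlt
    have : (K:ℝ) * δ + (-ε - δ) ≤ 0 := by linarith
    linarith [hKδ]
end

section
/- (Corollary) Consider an interference network with K transmitters and G receivers in which every demand set satisfies 1 ≤ |S_j| ≤ K−1 and every message is requested by at least one receiver (for every k ∈ [K] there exists j ∈ [G] with k ∈ S_j). If d* maximizes ∑_{k=1}^K d_k over the degrees-of-freedom region and d* has a strictly unique largest coordinate (there is an index k₁ with d*_{k₁} > d*_k for all k ≠ k₁), then ∑_{k=1}^K d*_k = 1. -/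
/-!
The indicator of any single message is feasible, so the optimum is at least 1. If some receiver is
interfered by a single message `i`, its constraint reads `∑ k, d k ≤ 1`, so the optimum is exactly 1.
Otherwise every interference set has at least two elements, and a maximizer `d` with a strict
unique largest coordinate `k₁` can be improved: raise every coordinate by a small `ε` and lower
`d k₁` by `(K - 1) ε`. The total grows by `ε`, while each constraint changes by
at most `(|S_j| + 2 - K) ε ≤ 0`: when `k₁` interferes with receiver `j`, the interference term is
still attained at `k₁` because `ε` is small compared to the gap below `d k₁`.
-/

open Finset Filter Topology

lemma exists_pos_forall_add_mul_lt {ι : Type*} [Finite ι] {p : ι → Prop} {a b : ι → ℝ}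
    (h : ∀ i, p i → a i < b i) (c : ℝ) : ∃ ε > 0, ∀ i, p i → a i + c * ε < b i := by
  have hsmall : ∀ᶠ ε in 𝓝[>] (0 : ℝ), ∀ i, p i → a i + c * ε < b i :=
    eventually_all.2 fun i => by
      by_cases hi : p i
      · have ht : Tendsto (fun ε => a i + c * ε) (𝓝[>] 0) (𝓝 (a i)) :=
          ((continuous_const.add (continuous_const.mul continuous_id)).tendsto' 0 (a i)
            (by simp)).mono_left nhdsWithin_le_nhds
        exact (ht.eventually_lt_const (h i hi)).mono fun _ hε _ => hε
      · exact Eventually.of_forall fun _ hi' => absurd hi' hi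
  obtain ⟨ε, hε, hpos⟩ := (hsmall.and self_mem_nhdsWithin).exists
  exact ⟨ε, hpos, hε⟩

section DoFRegion

variable {ι J : Type*} [Fintype ι] [DecidableEq ι]

def dofRegion (S : J → Finset ι) (hne : ∀ j, (S j)ᶜ.Nonempty) : Set (ι → ℝ) :=
  {d | (∀ k, 0 ≤ d k) ∧ ∀ j, ∑ k ∈ S j, d k + (S j)ᶜ.sup' (hne j) d ≤ 1}

variable (S : J → Finset ι) (hne : ∀ j, (S j)ᶜ.Nonempty)

lemma single_mem_dofRegion (k₀ : ι) : Pi.single k₀ (1 : ℝ) ∈ dofRegion S hne := by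
  refine ⟨fun k => by by_cases hk : k = k₀ <;> simp [hk], fun j => ?_⟩
  rw [sum_pi_single']
  by_cases hk : k₀ ∈ S j
  · have hsup : (S j)ᶜ.sup' (hne j) (Pi.single k₀ (1 : ℝ)) ≤ 0 :=
      sup'_le _ _ fun k hk' => by
        simp [show k ≠ k₀ from fun h => mem_compl.1 hk' (h ▸ hk)]
    simp only [if_pos hk]
    linarith
  · have hsup : (S j)ᶜ.sup' (hne j) (Pi.single k₀ (1 : ℝ)) ≤ 1 :=
      sup'_le _ _ fun k _ => by by_cases h : k = k₀ <;> simp [h]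
    simp only [if_neg hk]
    linarith

lemma one_le_sum_of_isMaxOn [Nonempty ι] {d : ι → ℝ}
    (hd : IsMaxOn (fun d => ∑ k, d k) (dofRegion S hne) d) : 1 ≤ ∑ k, d k := by
  obtain ⟨k₀⟩ := ‹Nonempty ι›
  simpa using isMaxOn_iff.1 hd _ (single_mem_dofRegion S hne k₀)

lemma sum_le_one_of_card_compl_eq_one {d : ι → ℝ} (hd : d ∈ dofRegion S hne) {j : J}
    (hj : #(S j)ᶜ = 1) : ∑ k, d k ≤ 1 := by
  obtain ⟨i, hi⟩ := card_eq_one.1 hj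
  have hconstr := hd.2 j
  have hsup : (S j)ᶜ.sup' (hne j) d = ∑ k ∈ (S j)ᶜ, d k := by simp [hi]
  rwa [hsup, add_comm, sum_compl_add_sum] at hconstr

def perturbMax (d : ι → ℝ) (k₁ : ι) (ε : ℝ) : ι → ℝ :=
  fun k => d k + ε - (Pi.single k₁ (((Fintype.card ι : ℝ) - 1) * ε) : ι → ℝ) k

variable {d : ι → ℝ} {k₁ : ι} {ε : ℝ}

lemma perturbMax_of_ne {k : ι} (hk : k ≠ k₁) : perturbMax d k₁ ε k = d k + ε := by
  simp [perturbMax, hk]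

lemma perturbMax_self : perturbMax d k₁ ε k₁ = d k₁ - ((Fintype.card ι : ℝ) - 2) * ε := by
  simp only [perturbMax, Pi.single_eq_same]
  ring

lemma sum_perturbMax (s : Finset ι) :
    ∑ k ∈ s, perturbMax d k₁ ε k =
      ∑ k ∈ s, d k + #s * ε - if k₁ ∈ s then ((Fintype.card ι : ℝ) - 1) * ε else 0 := by
  simp [perturbMax, sum_sub_distrib, sum_add_distrib, sum_pi_single']

lemma sum_univ_perturbMax : ∑ k, perturbMax d k₁ ε k = ∑ k, d k + ε := by
  rw [sum_perturbMax, if_pos (mem_univ k₁), card_univ]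
  ring

lemma perturbMax_le_perturbMax_self (hgap : ∀ k, k ≠ k₁ → d k + ((Fintype.card ι : ℝ) - 1) * ε ≤ d k₁)
    (k : ι) : perturbMax d k₁ ε k ≤ perturbMax d k₁ ε k₁ := by
  by_cases hk : k = k₁
  · rw [hk]
  · rw [perturbMax_of_ne hk, perturbMax_self]
    linarith [hgap k hk]

lemma perturbMax_nonneg (hd : ∀ k, 0 ≤ d k) (hε : 0 < ε)
    (hgap : ∀ k, k ≠ k₁ → d k + ((Fintype.card ι : ℝ) - 1) * ε ≤ d k₁) (k : ι) :
    0 ≤ perturbMax d k₁ ε k := by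
  by_cases hk : k = k₁
  · -- the largest coordinate is at least the mean, which is positive
    have hmean : ∑ k, perturbMax d k₁ ε k ≤ Fintype.card ι * perturbMax d k₁ ε k₁ := by
      simpa using sum_le_sum fun k (_ : k ∈ univ) => perturbMax_le_perturbMax_self hgap k
    have hsum : 0 < ∑ k, perturbMax d k₁ ε k := by
      rw [sum_univ_perturbMax]
      linarith [sum_nonneg fun k (_ : k ∈ univ) => hd k]
    rw [hk]
    exact pos_of_mul_pos_right (hsum.trans_le hmean) (Nat.cast_nonneg _) |>.le
  · rw [perturbMax_of_ne hk]
    linarith [hd k]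

lemma perturbMax_constraint_le {j : J} (hj : 2 ≤ #(S j)ᶜ) (hε : 0 < ε)
    (hgap : ∀ k, k ≠ k₁ → d k + ((Fintype.card ι : ℝ) - 1) * ε ≤ d k₁) :
    ∑ k ∈ S j, perturbMax d k₁ ε k + (S j)ᶜ.sup' (hne j) (perturbMax d k₁ ε) ≤
      ∑ k ∈ S j, d k + (S j)ᶜ.sup' (hne j) d := by
  have hcard : ((#(S j) + 2 : ℕ) : ℝ) * ε ≤ Fintype.card ι * ε := by
    gcongr
    rw [← card_add_card_compl (S j)]
    omega
  push_cast at hcard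
  rw [sum_perturbMax]
  by_cases hk : k₁ ∈ S j
  · have hsup : (S j)ᶜ.sup' (hne j) (perturbMax d k₁ ε) ≤ (S j)ᶜ.sup' (hne j) d + ε :=
      sup'_le _ _ fun k hk' => by
        rw [perturbMax_of_ne fun (h : k = k₁) => mem_compl.1 hk' (h ▸ hk)]
        exact add_le_add_left (le_sup' d hk') ε
    rw [if_pos hk]
    linarith
  · have hsup : (S j)ᶜ.sup' (hne j) (perturbMax d k₁ ε) ≤ perturbMax d k₁ ε k₁ :=
      sup'_le _ _ fun k _ => perturbMax_le_perturbMax_self hgap k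
    rw [perturbMax_self] at hsup
    rw [if_neg hk]
    linarith [le_sup' d (mem_compl.2 hk)]

lemma not_isMaxOn_sum_of_unique_max (hS : ∀ j, 2 ≤ #(S j)ᶜ) (hd : d ∈ dofRegion S hne)
    (hk₁ : ∀ k, k ≠ k₁ → d k < d k₁) :
    ¬IsMaxOn (fun d => ∑ k, d k) (dofRegion S hne) d := by
  obtain ⟨ε, hε, hgap⟩ := exists_pos_forall_add_mul_lt hk₁ ((Fintype.card ι : ℝ) - 1)
  replace hgap := fun k hk => (hgap k hk).le
  have hmem : perturbMax d k₁ ε ∈ dofRegion S hne :=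
    ⟨perturbMax_nonneg hd.1 hε hgap,
      fun j => (perturbMax_constraint_le S hne (hS j) hε hgap).trans (hd.2 j)⟩
  intro hmax
  have := isMaxOn_iff.1 hmax _ hmem
  simp only [sum_univ_perturbMax] at this
  linarith

end DoFRegion

theorem dof_unique_max_sum_one_general {K G : ℕ}
    (S : Fin G → Finset (Fin K))
    (hne : ∀ j, ((S j)ᶜ : Finset (Fin K)).Nonempty)
    (dstar : Fin K → ℝ)
    (hd0 : ∀ k, 0 ≤ dstar k)
    (hdof : ∀ j, (∑ k ∈ S j, dstar k) + ((S j)ᶜ).sup' (hne j) dstar ≤ 1)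
    (hmax : ∀ d : Fin K → ℝ, (∀ k, 0 ≤ d k) →
      (∀ j, (∑ k ∈ S j, d k) + ((S j)ᶜ).sup' (hne j) d ≤ 1) →
      ∑ k, d k ≤ ∑ k, dstar k)
    (huniq : ∃ k₁ : Fin K, ∀ k, k ≠ k₁ → dstar k < dstar k₁) :
    ∑ k, dstar k = 1 := by
  obtain ⟨k₁, hk₁⟩ := huniq
  have : Nonempty (Fin K) := ⟨k₁⟩
  have hfeas : dstar ∈ dofRegion S hne := ⟨hd0, hdof⟩
  have hopt : IsMaxOn (fun d => ∑ k, d k) (dofRegion S hne) dstar :=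
    isMaxOn_iff.2 fun d hd => hmax d hd.1 hd.2
  refine le_antisymm ?_ (one_le_sum_of_isMaxOn S hne hopt)
  by_cases hsingle : ∃ j, #(S j)ᶜ = 1
  · obtain ⟨j, hj⟩ := hsingle
    exact sum_le_one_of_card_compl_eq_one S hne hfeas hj
  · push Not at hsingle
    have hS : ∀ j, 2 ≤ #(S j)ᶜ := fun j => lt_of_le_of_ne (hne j).card_pos (hsingle j).symm
    exact absurd hopt (not_isMaxOn_sum_of_unique_max S hne hS hfeas hk₁)

/-- (Corollary) In an interference network in which every demand set satisfies
`1 ≤ |S_j| ≤ K - 1` and every message is requested by at least one receiver, if a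
maximizer `d⋆` of `∑ k, d k` over the degrees-of-freedom region has a strictly
unique largest coordinate, then `∑ k, d⋆ k = 1`. -/
theorem dof_unique_max_sum_one {K G : ℕ}
    (S : Fin G → Finset (Fin K))
    (hcard : ∀ j, 1 ≤ (S j).card ∧ (S j).card + 1 ≤ K)
    (hreq : ∀ k : Fin K, ∃ j, k ∈ S j)
    (hne : ∀ j, ((S j)ᶜ : Finset (Fin K)).Nonempty)
    (dstar : Fin K → ℝ)
    (hd0 : ∀ k, 0 ≤ dstar k)
    (hdof : ∀ j, (∑ k ∈ S j, dstar k) + ((S j)ᶜ).sup' (hne j) dstar ≤ 1)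
    (hmax : ∀ d : Fin K → ℝ, (∀ k, 0 ≤ d k) →
      (∀ j, (∑ k ∈ S j, d k) + ((S j)ᶜ).sup' (hne j) d ≤ 1) →
      ∑ k, d k ≤ ∑ k, dstar k)
    (huniq : ∃ k₁ : Fin K, ∀ k, k ≠ k₁ → dstar k < dstar k₁) :
    ∑ k, dstar k = 1 :=
  dof_unique_max_sum_one_general S hne dstar hd0 hdof hmax huniq
end

section
/- Let n₁ ≥ 1 and r ≥ 0, set m = 2n₁ + r, and let D be an m×m diagonal matrix over a field whose list of diagonal entries is a permutation of (a_1,…,a_{n₁}, a_1,…,a_{n₁}, b_1,…,b_r), where each b_i belongs to {a_1,…,a_{n₁}}. Then there exist n₁ pairwise disjoint index pairs {p_1,q_1},…,{p_{n₁},q_{n₁}} with D_{p_i p_i} = D_{q_i q_i} for each i, such that the vectors e_{p_1}+e_{q_1},…,e_{p_{n₁}}+e_{q_{n₁}} are linearly independent eigenvectors of D and no standard basis vector e_k lies in their span. -/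
/-- Let `n₁ ≥ 1`, `r ≥ 0`, `m = 2 n₁ + r`, and let `D = diagonal d` be an `m × m`
diagonal matrix over a field whose list of diagonal entries is a permutation of
`(a₁, …, a_{n₁}, a₁, …, a_{n₁}, b₁, …, b_r)` where each `bᵢ` lies in `{a₁, …, a_{n₁}}`.
Then there exist `n₁` pairwise disjoint index pairs `{pᵢ, qᵢ}` with equal diagonal
entries such that the vectors `e_{pᵢ} + e_{qᵢ}` are linearly independent eigenvectors
of `D` and no standard basis vector lies in their span. -/
theorem diagonal_paired_entries_eigenvectors {F : Type*} [Field F]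
    (n₁ r : ℕ) (hn₁ : 1 ≤ n₁)
    (a : Fin n₁ → F) (b : Fin r → F) (hb : ∀ i, ∃ j, b i = a j)
    (d : Fin (2 * n₁ + r) → F)
    (e : Fin (2 * n₁ + r) ≃ (Fin n₁ ⊕ Fin n₁ ⊕ Fin r))
    (hperm : ∀ k, d k = Sum.elim a (Sum.elim a b) (e k)) :
    ∃ p q : Fin n₁ → Fin (2 * n₁ + r),
      (∀ i, p i ≠ q i) ∧
      (∀ i i', i ≠ i' → ({p i, q i} : Set (Fin (2 * n₁ + r))) ∩ {p i', q i'} = ∅) ∧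
      (∀ i, d (p i) = d (q i)) ∧
      LinearIndependent F
        (fun i => (Pi.single (p i) 1 + Pi.single (q i) 1 : Fin (2 * n₁ + r) → F)) ∧
      (∀ i, ∃ μ : F, (Matrix.diagonal d).mulVec (Pi.single (p i) 1 + Pi.single (q i) 1)
          = μ • (Pi.single (p i) 1 + Pi.single (q i) 1)) ∧
      (∀ k, (Pi.single k 1 : Fin (2 * n₁ + r) → F) ∉ Submodule.span F
        (Set.range (fun i =>
          (Pi.single (p i) 1 + Pi.single (q i) 1 : Fin (2 * n₁ + r) → F)))) := by
  set p : Fin n₁ → Fin (2 * n₁ + r) := fun i => e.symm (.inl i) with hp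
  set q : Fin n₁ → Fin (2 * n₁ + r) := fun i => e.symm (.inr (.inl i)) with hq
  have hdp : ∀ i, d (p i) = a i := by
    intro i; rw [hperm]; simp [p]
  have hdq : ∀ i, d (q i) = a i := by
    intro i; rw [hperm]; simp [q]
  have hpq : ∀ i j, p i ≠ q j := by
    intro i j h
    have := e.symm.injective h
    simp at this
  have hpi : Function.Injective p := fun i j h => by
    have := e.symm.injective h; simpa using this
  have hqi : Function.Injective q := fun i j h => by
    have := e.symm.injective h; simpa using this
  set v : Fin n₁ → Fin (2 * n₁ + r) → F :=
    fun i => Pi.single (p i) 1 + Pi.single (q i) 1 with hv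
  have hvp : ∀ i j, v i (p j) = if i = j then 1 else 0 := by
    intro i j
    simp only [hv, Pi.add_apply, Pi.single_apply]
    rw [if_neg (fun hh : p j = q i => hpq j i hh)]
    by_cases h : i = j
    · subst h; simp
    · rw [if_neg (fun hh => h (hpi hh).symm)]; simp [h]
  have hvq : ∀ i j, v i (q j) = if i = j then 1 else 0 := by
    intro i j
    simp only [hv, Pi.add_apply, Pi.single_apply]
    rw [if_neg (fun hh : q j = p i => hpq i j hh.symm)]
    by_cases h : i = j
    · subst h; simp
    · rw [if_neg (fun hh => h (hqi hh).symm)]; simp [h]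
  have hspan : ∀ w ∈ Submodule.span F (Set.range v),
      (∀ i, w (p i) = w (q i)) ∧ (∀ j : Fin r, w (e.symm (.inr (.inr j))) = 0) := by
    intro w hw
    induction hw using Submodule.span_induction with
    | mem x hx =>
      obtain ⟨i, rfl⟩ := hx
      constructor
      · intro j; rw [hvp, hvq]
      · intro j
        simp only [hv, Pi.add_apply, Pi.single_apply]
        rw [if_neg, if_neg]
        · simp
        · intro h; have := e.symm.injective h; simp at this
        · intro h; have := e.symm.injective h; simp at this
    | zero => simp
    | add x y _ _ hx hy =>
      exact ⟨fun i => by simp [hx.1 i, hy.1 i], fun j => by simp [hx.2 j, hy.2 j]⟩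
    | smul c x _ hx =>
      exact ⟨fun i => by simp [hx.1 i], fun j => by simp [hx.2 j]⟩
  refine ⟨p, q, fun i => hpq i i, ?_, fun i => by rw [hdp, hdq], ?_, ?_, ?_⟩
  · intro i i' hii
    ext k
    simp only [Set.mem_inter_iff, Set.mem_insert_iff, Set.mem_singleton_iff,
      Set.mem_empty_iff_false, iff_false, not_and]
    rintro (rfl | rfl) (h | h)
    · exact hii (hpi h)
    · exact hpq i i' h
    · exact hpq i' i h.symm
    · exact hii (hqi h)
  · show LinearIndependent F v
    rw [Fintype.linearIndependent_iff]
    intro c hc i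
    have h0 := congrFun hc (p i)
    simp only [Finset.sum_apply, Pi.smul_apply, smul_eq_mul, Pi.zero_apply] at h0
    have h1 : ∀ x, c x * v x (p i) = if x = i then c x else 0 := by
      intro x
      rw [hvp]
      by_cases h : x = i <;> simp [h]
    rw [Finset.sum_congr rfl (fun x _ => h1 x), Finset.sum_ite_eq' Finset.univ i c] at h0
    simpa using h0
  · intro i
    refine ⟨a i, ?_⟩
    funext k
    rw [Matrix.mulVec_diagonal, Pi.smul_apply, smul_eq_mul]
    rcases (e.symm.surjective k) with ⟨s, rfl⟩
    have hvs : ∀ u, (Pi.single (p i) 1 + Pi.single (q i) 1 : Fin (2*n₁+r) → F) u = v i u :=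
      fun _ => rfl
    rcases s with j | j | j
    · by_cases h : j = i
      · subst h
        rw [show d (e.symm (Sum.inl j)) = a j from hdp j]
      · rw [hvs, show e.symm (Sum.inl j) = p j from rfl, hvp,
          if_neg (fun hh => h hh.symm), mul_zero, mul_zero]
    · by_cases h : j = i
      · subst h
        rw [show d (e.symm (Sum.inr (Sum.inl j))) = a j from hdq j]
      · rw [hvs, show e.symm (Sum.inr (Sum.inl j)) = q j from rfl, hvq,
          if_neg (fun hh => h hh.symm), mul_zero, mul_zero]
    · have h1 : v i (e.symm (Sum.inr (Sum.inr j))) = 0 := by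
        simp only [hv, Pi.add_apply, Pi.single_apply]
        rw [if_neg, if_neg]
        · simp
        · intro h; have := e.symm.injective h; simp at this
        · intro h; have := e.symm.injective h; simp at this
      rw [hvs, h1, mul_zero, mul_zero]
  · intro k hk
    have hk' : (Pi.single k 1 : Fin (2*n₁+r) → F) ∈ Submodule.span F (Set.range v) := hk
    obtain ⟨h1, h2⟩ := hspan _ hk'
    rcases (e.symm.surjective k) with ⟨s, rfl⟩
    rcases s with j | j | j
    · have := h1 j
      rw [show e.symm (Sum.inl j) = p j from rfl, Pi.single_eq_same,
        Pi.single_apply, if_neg (fun hh : q j = p j => hpq j j hh.symm)] at this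
      exact one_ne_zero this
    · have := h1 j
      rw [show e.symm (Sum.inr (Sum.inl j)) = q j from rfl, Pi.single_eq_same,
        Pi.single_apply, if_neg (fun hh : p j = q j => hpq j j hh)] at this
      exact one_ne_zero this.symm
    · have := h2 j
      rw [Pi.single_eq_same] at this
      exact one_ne_zero this
end
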